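/- arXiv:2011.03362 — 4 statements merged into one kernel-verified Lean document; each statement's English description precedes it below -/
import Mathlib

section
/- Let Y be a separable Banach space with the bounded approximation property, and let Z be a dense subspace of Y. Then there exists a sequence of bounded linear maps T_n : Y → Y with range contained in Z such that ‖T_n y − y‖ → 0 as n → ∞ for every y ∈ Y. -/
/-!
The operators with range in `Z` form a subspace whose closure contains every rank-one operator
`x ↦ f x • v` (approximate `v` from `Z`), hence every finite-rank operator. The conditions
`‖T‖ < M + 1` and `‖T y - y‖ < ε` for finitely many `y` are open in `T`, so the bounded
approximation property can be realised with range in `Z` on the first `n` points of a dense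
sequence. The resulting sequence is uniformly bounded, hence equicontinuous, so its convergence
to the identity on that dense sequence propagates to all of `Y`.
-/

open Filter Topology

section

variable {𝕜 E F : Type*} [NontriviallyNormedField 𝕜] [NormedAddCommGroup E] [NormedSpace 𝕜 E]
  [NormedAddCommGroup F] [NormedSpace 𝕜 F]

namespace Submodule

variable (E) in
def clmWithRangeIn (Z : Submodule 𝕜 F) : Submodule 𝕜 (E →L[𝕜] F) where
  carrier := {T | ∀ x, T x ∈ Z}
  add_mem' hS hT x := Z.add_mem (hS x) (hT x)
  zero_mem' _ := Z.zero_mem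
  smul_mem' c _ hT x := Z.smul_mem c (hT x)

theorem mem_clmWithRangeIn {Z : Submodule 𝕜 F} {T : E →L[𝕜] F} :
    T ∈ Z.clmWithRangeIn E ↔ LinearMap.range (T : E →ₗ[𝕜] F) ≤ Z :=
  ⟨fun h ↦ by rintro _ ⟨x, rfl⟩; exact h x, fun h x ↦ h ⟨x, rfl⟩⟩

theorem smulRight_mem_topologicalClosure_clmWithRangeIn {Z : Submodule 𝕜 F}
    (hZ : Dense (Z : Set F)) (f : E →L[𝕜] 𝕜) (v : F) :
    f.smulRight v ∈ (Z.clmWithRangeIn E).topologicalClosure :=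
  map_mem_closure (ContinuousLinearMap.smulRightL 𝕜 E F f).continuous (hZ v)
    fun _ hz x ↦ Z.smul_mem (f x) hz

end Submodule

theorem ContinuousLinearMap.exists_eq_sum_smulRight [CompleteSpace 𝕜] (S : E →L[𝕜] F)
    [FiniteDimensional 𝕜 (LinearMap.range (S : E →ₗ[𝕜] F))] :
    ∃ (n : ℕ) (f : Fin n → E →L[𝕜] 𝕜) (v : Fin n → F), S = ∑ i, (f i).smulRight (v i) := by
  set V := LinearMap.range (S : E →ₗ[𝕜] F)
  let b := Module.finBasis 𝕜 V
  let S' : E →L[𝕜] V := S.codRestrict V fun y ↦ LinearMap.mem_range_self _ y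
  refine ⟨_, fun i ↦ (proj i).comp (b.equivFunL.toContinuousLinearMap.comp S'), fun i ↦ b i, ?_⟩
  ext y
  simp only [sum_apply, smulRight_apply, comp_apply, ContinuousLinearEquiv.coe_coe, proj_apply,
    Module.Basis.equivFunL_apply]
  simp_rw [← Submodule.coe_smul, ← Submodule.coe_sum, b.sum_repr]
  rfl

theorem Submodule.mem_topologicalClosure_clmWithRangeIn [CompleteSpace 𝕜] {Z : Submodule 𝕜 F}
    (hZ : Dense (Z : Set F)) (S : E →L[𝕜] F)
    [FiniteDimensional 𝕜 (LinearMap.range (S : E →ₗ[𝕜] F))] :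
    S ∈ (Z.clmWithRangeIn E).topologicalClosure := by
  obtain ⟨n, f, v, rfl⟩ := S.exists_eq_sum_smulRight
  exact sum_mem fun i _ ↦ smulRight_mem_topologicalClosure_clmWithRangeIn hZ (f i) (v i)

theorem Submodule.exists_mem_clmWithRangeIn_of_finiteDimensional_range [CompleteSpace 𝕜]
    {Z : Submodule 𝕜 E} (hZ : Dense (Z : Set E)) {S : E →L[𝕜] E}
    [FiniteDimensional 𝕜 (LinearMap.range (S : E →ₗ[𝕜] E))] {s : Set E} (hs : s.Finite)
    {M ε : ℝ} (hSM : ‖S‖ < M) (hSs : ∀ y ∈ s, ‖S y - y‖ < ε) :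
    ∃ T ∈ Z.clmWithRangeIn E, ‖T‖ < M ∧ ∀ y ∈ s, ‖T y - y‖ < ε := by
  have hM : ∀ᶠ T in 𝓝 S, ‖T‖ < M :=
    continuous_norm.continuousAt.eventually_lt continuousAt_const hSM
  have hpts : ∀ᶠ T in 𝓝 S, ∀ y ∈ s, ‖T y - y‖ < ε := hs.eventually_all.2 fun y hy ↦
    ((continuous_eval_const y).sub continuous_const).norm.continuousAt.eventually_lt
      continuousAt_const (hSs y hy)
  have hZS := mem_closure_iff_frequently.1 (Z.mem_topologicalClosure_clmWithRangeIn hZ S)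
  obtain ⟨T, ⟨hTM, hTs⟩, hTZ⟩ := ((hM.and hpts).and_frequently hZS).exists
  exact ⟨T, hTZ, hTM, hTs⟩

theorem ContinuousLinearMap.tendsto_apply_of_denseRange {ι α : Type*} {l : Filter ι}
    {T : ι → E →L[𝕜] F} (hT : ∃ C, ∀ i, ‖T i‖ ≤ C) (A : E →L[𝕜] F) {u : α → E}
    (hu : DenseRange u) (h : ∀ a, Tendsto (fun i ↦ T i (u a)) l (𝓝 (A (u a)))) (y : E) :
    Tendsto (fun i ↦ T i y) l (𝓝 (A y)) :=
  have hequi : Equicontinuous ((↑) ∘ T) := ((NormedSpace.equicontinuous_TFAE T).out 5 1).1 hT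
  hu.induction_on y (hequi.isClosed_setOfPred_tendsto A.continuous) h

end

theorem stmt_3_general {Y : Type*} [NormedAddCommGroup Y] [NormedSpace ℂ Y]
    [TopologicalSpace.SeparableSpace Y]
    (Z : Submodule ℂ Y) (hZdense : Dense (Z : Set Y))
    (hBAP : ∃ M : ℝ, ∀ K : Set Y, IsCompact K → ∀ ε : ℝ, 0 < ε →
      ∃ T : Y →L[ℂ] Y, FiniteDimensional ℂ (LinearMap.range (T : Y →ₗ[ℂ] Y)) ∧ ‖T‖ ≤ M ∧
        ∀ y ∈ K, ‖T y - y‖ ≤ ε) :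
    ∃ T : ℕ → Y →L[ℂ] Y, (∀ n, LinearMap.range (T n : Y →ₗ[ℂ] Y) ≤ Z) ∧
      ∀ y : Y, Tendsto (fun n => ‖T n y - y‖) atTop (nhds 0) := by
  obtain ⟨M, hM⟩ := hBAP
  obtain ⟨u, hu⟩ := TopologicalSpace.exists_dense_seq Y
  have hT (n : ℕ) : ∃ T ∈ Z.clmWithRangeIn Y, ‖T‖ < M + 1 ∧
      ∀ y ∈ u '' Set.Iic n, ‖T y - y‖ < 1 / (n + 1) := by
    have hs := (Set.finite_Iic n).image u
    obtain ⟨S, _, hSM, hSs⟩ := hM _ hs.isCompact (1 / (n + 2)) (by positivity)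
    refine Z.exists_mem_clmWithRangeIn_of_finiteDimensional_range hZdense hs (by linarith)
      fun y hy ↦ (hSs y hy).trans_lt ?_
    gcongr
    linarith
  choose T hTZ hTM hTu using hT
  refine ⟨T, fun n ↦ Submodule.mem_clmWithRangeIn.1 (hTZ n), fun y ↦ ?_⟩
  rw [← tendsto_iff_norm_sub_tendsto_zero]
  refine ContinuousLinearMap.tendsto_apply_of_denseRange ⟨M + 1, fun n ↦ (hTM n).le⟩
    (ContinuousLinearMap.id ℂ Y) hu (fun i ↦ ?_) y
  rw [tendsto_iff_norm_sub_tendsto_zero]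
  refine squeeze_zero' (.of_forall fun n ↦ norm_nonneg _) ?_
    tendsto_one_div_add_atTop_nhds_zero_nat
  filter_upwards [eventually_ge_atTop i] with n hn
  exact (hTu n _ (Set.mem_image_of_mem u hn)).le

theorem stmt_3 {Y : Type*} [NormedAddCommGroup Y] [NormedSpace ℂ Y] [CompleteSpace Y]
    [TopologicalSpace.SeparableSpace Y]
    (Z : Submodule ℂ Y) (hZdense : Dense (Z : Set Y))
    (hBAP : ∃ M : ℝ, ∀ K : Set Y, IsCompact K → ∀ ε : ℝ, 0 < ε →
      ∃ T : Y →L[ℂ] Y, FiniteDimensional ℂ (LinearMap.range (T : Y →ₗ[ℂ] Y)) ∧ ‖T‖ ≤ M ∧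
        ∀ y ∈ K, ‖T y - y‖ ≤ ε) :
    ∃ T : ℕ → Y →L[ℂ] Y, (∀ n, LinearMap.range (T n : Y →ₗ[ℂ] Y) ≤ Z) ∧
      ∀ y : Y, Tendsto (fun n => ‖T n y - y‖) atTop (nhds 0) :=
  stmt_3_general Z hZdense hBAP
end

section
/- Let Y be a Banach space and Z a subspace of Y with a countable Hamel basis. Then the following are equivalent: (i) there exists a sequence of bounded linear maps T_n : Y → Z such that ‖T_n y − y‖ → 0 for each y ∈ Y; (ii) Z is dense in Y and Y has the bounded approximation property. -/
/-!
(i) ⇒ (ii): `Z` is dense since `T n y → y` with `T n y ∈ Z`. By Banach–Steinhaus the `T n` are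
uniformly bounded, hence equicontinuous, so their pointwise convergence is uniform on compact sets;
this gives the bounded approximation property with `M = sup ‖T n‖`. Each `T n` has finite rank by
Baire: `Y` is covered by the countably many closed sets `(T n)⁻¹ (span t)`, `t` a finite subset of
the countable spanning set of `Z`.

(ii) ⇒ (i): `Y` is separable; fix a dense sequence `u`. Apply the bounded approximation property
to `{u 0, …, u n}` with `ε = 1 / (n + 1)` and move the resulting finite-rank operator into `Z` by
replacing the basis vectors of its range with nearby vectors of `Z`. The operators `S n` obtained
are uniformly bounded and converge to the identity on the dense set `range u`, hence everywhere.
-/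

open Filter Set Topology

namespace ContinuousLinearMap

section

variable {𝕜 E F ι : Type*} [NontriviallyNormedField 𝕜]
  [NormedAddCommGroup E] [NormedSpace 𝕜 E] [NormedAddCommGroup F] [NormedSpace 𝕜 F]

theorem equicontinuous_of_norm_le {T : ι → E →L[𝕜] F} {C : ℝ} (hC : ∀ i, ‖T i‖ ≤ C) :
    Equicontinuous fun i => ⇑(T i) :=
  ((NormedSpace.equicontinuous_TFAE T).out 5 1).mp (⟨C, hC⟩ : ∃ C, ∀ i, ‖T i‖ ≤ C)

theorem tendstoUniformlyOn_of_norm_le {T : ι → E →L[𝕜] F} {C : ℝ} (hC : ∀ i, ‖T i‖ ≤ C)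
    {l : Filter ι} {g : E → F} (hg : ∀ y, Tendsto (fun i => T i y) l (𝓝 (g y)))
    {K : Set E} (hK : IsCompact K) :
    TendstoUniformlyOn (fun i => ⇑(T i)) g l K := by
  have hunif := (EquicontinuousOn.tendsto_uniformOnFun_iff_pi' (𝔖 := {K}) (by simpa using hK)
    (fun _ _ => (equicontinuous_of_norm_le hC).equicontinuousOn _) l g).mpr
    (tendsto_pi_nhds.mpr fun y => hg y)
  exact UniformOnFun.tendsto_iff_tendstoUniformlyOn.mp hunif K rfl

theorem tendsto_of_norm_le_of_dense {T : ι → E →L[𝕜] F} {C : ℝ} (hC : ∀ i, ‖T i‖ ≤ C)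
    {l : Filter ι} {g : E → F} (hg : Continuous g) {s : Set E} (hs : Dense s)
    (hTs : ∀ y ∈ s, Tendsto (fun i => T i y) l (𝓝 (g y))) (y : E) :
    Tendsto (fun i => T i y) l (𝓝 (g y)) :=
  ((equicontinuous_of_norm_le hC).isClosed_setOfPred_tendsto hg).closure_subset_iff.mpr hTs
    (hs y)

variable [CompleteSpace 𝕜]

theorem finiteDimensional_range_of_le_span [CompleteSpace E]
    (T : E →L[𝕜] F) {s : Set F} (hs : s.Countable)
    (hT : LinearMap.range (T : E →ₗ[𝕜] F) ≤ Submodule.span 𝕜 s) :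
    FiniteDimensional 𝕜 (LinearMap.range (T : E →ₗ[𝕜] F)) := by
  let 𝒯 := {t : Set F | t.Finite ∧ t ⊆ s}
  have hcover : ⋃ t ∈ 𝒯, T ⁻¹' Submodule.span 𝕜 t = univ := by
    refine eq_univ_of_forall fun y => mem_iUnion₂.mpr ?_
    obtain ⟨t, hts, hy⟩ := Submodule.mem_span_finite_of_mem_span (hT ⟨y, rfl⟩)
    exact ⟨t, ⟨t.finite_toSet, hts⟩, hy⟩
  have hclosed : ∀ t ∈ 𝒯, IsClosed (T ⁻¹' Submodule.span 𝕜 t) := fun t ht =>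
    have := FiniteDimensional.span_of_finite 𝕜 ht.1
    (Submodule.closed_of_finiteDimensional _).preimage T.continuous
  obtain ⟨t, ht, hint⟩ := mem_iUnion₂.mp (dense_biUnion_interior_of_closed hclosed
    (countable_ofPred_finite_subset hs) hcover).nonempty.some_mem
  have htop := Submodule.eq_top_of_nonempty_interior'
    ((Submodule.span 𝕜 t).comap (T : E →ₗ[𝕜] F)) ⟨_, hint⟩
  have := FiniteDimensional.span_of_finite 𝕜 ht.1
  refine Submodule.finiteDimensional_of_le (S₂ := Submodule.span 𝕜 t) ?_
  rintro _ ⟨y, rfl⟩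
  exact (htop ▸ Submodule.mem_top : y ∈ (Submodule.span 𝕜 t).comap (T : E →ₗ[𝕜] F))

theorem mem_closure_setOf_range_le {Z : Submodule 𝕜 F}
    (hZ : Dense (Z : Set F)) (T : E →L[𝕜] F)
    [FiniteDimensional 𝕜 (LinearMap.range (T : E →ₗ[𝕜] F))] :
    T ∈ closure {S : E →L[𝕜] F | LinearMap.range (S : E →ₗ[𝕜] F) ≤ Z} := by
  set W := LinearMap.range (T : E →ₗ[𝕜] F)
  let n := Module.finrank 𝕜 W
  let b : Module.Basis (Fin n) 𝕜 W := Module.finBasis 𝕜 W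
  let c : Fin n → E →L[𝕜] 𝕜 := fun i => (LinearMap.toContinuousLinearMap (b.coord i)).comp
    (T.codRestrict W (LinearMap.mem_range_self _))
  -- `Ψ v` replaces the basis vector `b i` by `v i` in the expansion of `T`.
  let Ψ : (Fin n → F) → E →L[𝕜] F := fun v => ∑ i, (c i).smulRight (v i)
  have hΨ : Continuous Ψ := by
    show Continuous fun v : Fin n → F => ∑ i, smulRightL 𝕜 E F (c i) (v i)
    fun_prop
  have hΨT : Ψ (fun i => b i) = T := by
    ext y
    have := congrArg Subtype.val (b.sum_repr (T.codRestrict W (LinearMap.mem_range_self _) y))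
    rw [Submodule.coe_sum] at this
    simpa [Ψ, c] using this
  have hΨZ : Ψ '' Set.pi univ (fun _ => (Z : Set F)) ⊆
      {S | LinearMap.range (S : E →ₗ[𝕜] F) ≤ Z} := by
    rintro _ ⟨v, hv, rfl⟩ _ ⟨y, rfl⟩
    simp only [Ψ, coe_coe, FunLike.coe_sum, Finset.sum_apply, smulRight_apply]
    exact Z.sum_mem fun i _ => Z.smul_mem _ (hv i trivial)
  have hdense : closure (Set.pi univ fun _ : Fin n => (Z : Set F)) = univ :=
    (dense_pi univ fun _ _ => hZ).closure_eq
  rw [← hΨT]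
  exact closure_mono hΨZ (image_closure_subset_closure_image hΨ ⟨_, hdense ▸ trivial, rfl⟩)

end

end ContinuousLinearMap

section

variable (𝕜 E : Type*) [NontriviallyNormedField 𝕜] [NormedAddCommGroup E] [NormedSpace 𝕜 E]

def HasBoundedApproximationPropertyWith (M : ℝ) : Prop :=
  ∀ K : Set E, IsCompact K → ∀ ε : ℝ, 0 < ε →
    ∃ T : E →L[𝕜] E, FiniteDimensional 𝕜 (LinearMap.range (T : E →ₗ[𝕜] E)) ∧ ‖T‖ ≤ M ∧
      ∀ y ∈ K, ‖T y - y‖ ≤ ε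

variable {𝕜 E}

theorem hasBoundedApproximationPropertyWith_of_tendsto [CompleteSpace 𝕜] [CompleteSpace E]
    {s : Set E} (hs : s.Countable) {T : ℕ → E →L[𝕜] E}
    (hrange : ∀ n, LinearMap.range (T n : E →ₗ[𝕜] E) ≤ Submodule.span 𝕜 s)
    (hT : ∀ y, Tendsto (fun n => T n y) atTop (𝓝 y)) :
    ∃ M, HasBoundedApproximationPropertyWith 𝕜 E M := by
  obtain ⟨C, hC⟩ := banach_steinhaus fun y =>
    ((hT y).norm.bddAbove_range.imp fun _ h n => h ⟨n, rfl⟩ : ∃ C, ∀ n, ‖T n y‖ ≤ C)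
  refine ⟨C, fun K hK ε hε => ?_⟩
  obtain ⟨n, hn⟩ := (Metric.tendstoUniformlyOn_iff.mp
    (ContinuousLinearMap.tendstoUniformlyOn_of_norm_le hC hT hK) ε hε).exists
  refine ⟨T n, (T n).finiteDimensional_range_of_le_span hs (hrange n), hC n,
    fun y hy => ?_⟩
  rw [← dist_eq_norm, dist_comm]
  exact (hn y hy).le

namespace HasBoundedApproximationPropertyWith

variable [CompleteSpace 𝕜] {M : ℝ}

theorem exists_range_le (hM : HasBoundedApproximationPropertyWith 𝕜 E M) {Z : Submodule 𝕜 E}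
    (hZ : Dense (Z : Set E)) {K : Set E} (hK : IsCompact K) {ε : ℝ} (hε : 0 < ε) :
    ∃ S : E →L[𝕜] E, LinearMap.range (S : E →ₗ[𝕜] E) ≤ Z ∧ ‖S‖ ≤ M + ε ∧
      ∀ y ∈ K, ‖S y - y‖ ≤ ε * ‖y‖ + ε := by
  obtain ⟨T, hTfin, hTM, hTK⟩ := hM K hK ε hε
  obtain ⟨S, hSZ, hST⟩ := Metric.mem_closure_iff.mp (T.mem_closure_setOf_range_le hZ) ε hε
  rw [dist_eq_norm'] at hST
  refine ⟨S, hSZ, ?_, fun y hy => ?_⟩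
  · calc ‖S‖ = ‖(S - T) + T‖ := by rw [sub_add_cancel]
      _ ≤ M + ε := by linarith [norm_add_le (S - T) T]
  · calc ‖S y - y‖ = ‖(S - T) y + (T y - y)‖ := by
          rw [sub_apply, sub_add_sub_cancel]
      _ ≤ ‖S - T‖ * ‖y‖ + ε := norm_add_le_of_le ((S - T).le_opNorm y) (hTK y hy)
      _ ≤ ε * ‖y‖ + ε := by gcongr

theorem exists_tendsto [TopologicalSpace.SeparableSpace E]
    (hM : HasBoundedApproximationPropertyWith 𝕜 E M) {Z : Submodule 𝕜 E}
    (hZ : Dense (Z : Set E)) :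
    ∃ S : ℕ → E →L[𝕜] E, (∀ n, LinearMap.range (S n : E →ₗ[𝕜] E) ≤ Z) ∧
      ∀ y, Tendsto (fun n => S n y) atTop (𝓝 y) := by
  obtain ⟨u, hu⟩ := TopologicalSpace.exists_dense_seq E
  have hε : ∀ n : ℕ, (0 : ℝ) < 1 / (n + 1) := fun n => by positivity
  choose S hSZ hSM hSu using fun n : ℕ =>
    hM.exists_range_le hZ ((finite_Iic n).image u).isCompact (hε n)
  have hSM' : ∀ n, ‖S n‖ ≤ M + 1 := fun n =>
    (hSM n).trans <| add_le_add_right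
      (div_le_one_of_le₀ (le_add_of_nonneg_left n.cast_nonneg) n.cast_add_one_pos.le) M
  refine ⟨S, hSZ,
    ContinuousLinearMap.tendsto_of_norm_le_of_dense hSM' continuous_id hu ?_⟩
  rintro _ ⟨k, rfl⟩
  rw [tendsto_iff_norm_sub_tendsto_zero]
  refine squeeze_zero' (Eventually.of_forall fun n => norm_nonneg _) ?_
    ((tendsto_one_div_add_atTop_nhds_zero_nat.mul_const (‖u k‖ + 1)).trans (by simp))
  filter_upwards [eventually_ge_atTop k] with n hn
  calc ‖S n (u k) - u k‖ ≤ 1 / (n + 1) * ‖u k‖ + 1 / (n + 1) := hSu n _ ⟨k, hn, rfl⟩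
    _ = 1 / (n + 1) * (‖u k‖ + 1) := by ring

end HasBoundedApproximationPropertyWith

end

theorem stmt_4 {Y : Type*} [NormedAddCommGroup Y] [NormedSpace ℂ Y] [CompleteSpace Y]
    (Z : Submodule ℂ Y) (hZ : ∃ s : Set Y, s.Countable ∧ Submodule.span ℂ s = Z) :
    (∃ T : ℕ → Y →L[ℂ] Y, (∀ n, LinearMap.range (T n : Y →ₗ[ℂ] Y) ≤ Z) ∧
        ∀ y : Y, Tendsto (fun n => ‖T n y - y‖) atTop (nhds 0)) ↔
      (Dense (Z : Set Y) ∧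
        ∃ M : ℝ, ∀ K : Set Y, IsCompact K → ∀ ε : ℝ, 0 < ε →
          ∃ T : Y →L[ℂ] Y, FiniteDimensional ℂ (LinearMap.range (T : Y →ₗ[ℂ] Y)) ∧ ‖T‖ ≤ M ∧
            ∀ y ∈ K, ‖T y - y‖ ≤ ε) := by
  obtain ⟨s, hs, rfl⟩ := hZ
  simp_rw [← tendsto_iff_norm_sub_tendsto_zero]
  constructor
  · rintro ⟨T, hrange, hT⟩
    exact ⟨fun y => mem_closure_of_tendsto (hT y) (.of_forall fun n => hrange n ⟨y, rfl⟩),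
      hasBoundedApproximationPropertyWith_of_tendsto hs hrange hT⟩
  · rintro ⟨hdense, M, hM⟩
    have : TopologicalSpace.SeparableSpace Y := by
      rw [← hdense.isSeparable_iff]
      exact hs.isSeparable.span
    exact HasBoundedApproximationPropertyWith.exists_tendsto hM hdense
end

section
/- Let Y be a separable, infinite-dimensional complex Banach space and (α_n)_{n≥0} a positive sequence with α_n^{1/n} → 1. Then there exists a Banach space X of holomorphic functions on the unit disk 𝔻 (continuously embedded in Hol(𝔻)) such that: X is isometrically isomorphic to Y; X contains all functions holomorphic on a neighborhood of the closed disk; the polynomials are dense in X; and ‖z^n‖_X = α_n for all n ≥ 0. -/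
open Filter Metric

section AuxHelpers

variable {Y : Type*} [NormedAddCommGroup Y] [NormedSpace ℂ Y]




variable {Y : Type*} [NormedAddCommGroup Y] [NormedSpace ℂ Y]

lemma aux_ker_infdim (hinf : ¬ FiniteDimensional ℂ Y) {W : Type*} [AddCommGroup W] [Module ℂ W]
    [FiniteDimensional ℂ W] (T : Y →ₗ[ℂ] W) : ¬ FiniteDimensional ℂ (LinearMap.ker T) := by
  intro hker
  apply hinf
  have h1 : Module.rank ℂ (LinearMap.range T) < Cardinal.aleph0 := Module.rank_lt_aleph0 ℂ _
  have h2 : Module.rank ℂ (LinearMap.ker T) < Cardinal.aleph0 := Module.rank_lt_aleph0 ℂ _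
  have hsum := LinearMap.lift_rank_range_add_rank_ker T
  have hY : Cardinal.lift.{_} (Module.rank ℂ Y) < Cardinal.aleph0 := by
    rw [← hsum]
    exact Cardinal.add_lt_aleph0 (by simpa using h1) (by simpa using h2)
  rw [Cardinal.lift_lt_aleph0] at hY
  exact Module.rank_lt_aleph0_iff.mp hY

lemma aux_far_vector (V : Submodule ℂ Y) (hV : ¬ FiniteDimensional ℂ V)
    (G : Submodule ℂ Y) (hG : FiniteDimensional ℂ G) :
    ∃ b : Y, b ∈ V ∧ ‖b‖ = 1 ∧ ∀ g ∈ G, (4:ℝ)⁻¹ ≤ ‖b - g‖ := by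
  by_contra hcon
  push_neg at hcon
  obtain ⟨f, hfR, hfsep⟩ := exists_seq_norm_le_one_le_norm_sub'
    (𝕜 := ℂ) (E := V) (c := ((8/5 : ℝ) : ℂ))
    (by rw [Complex.norm_real, Real.norm_eq_abs]; rw [abs_of_pos] <;> norm_num)
    (R := 1.7)
    (by rw [Complex.norm_real, Real.norm_eq_abs]; rw [abs_of_pos] <;> norm_num) hV
  have key : ∀ n : ℕ, ∃ g, g ∈ G ∧ ‖((f n : Y)) - g‖ ≤ 0.425 ∧ ‖g‖ ≤ 2.2 := by
    intro n
    by_cases hz : (f n : Y) = 0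
    · exact ⟨0, G.zero_mem, by norm_num [hz], by norm_num⟩
    · have hnorm : ‖(f n : Y)‖ ≠ 0 := by simpa using hz
      set u : Y := (‖(f n : Y)‖ : ℂ)⁻¹ • (f n : Y) with hu
      have hufac : ‖u‖ = 1 := by
        rw [hu, norm_smul, norm_inv, Complex.norm_real, Real.norm_eq_abs,
          abs_of_nonneg (norm_nonneg _)]
        field_simp
      have huV : u ∈ V := V.smul_mem _ (f n).2
      obtain ⟨g, hgG, hg⟩ := hcon u huV hufac
      have hle : ‖(f n : Y)‖ ≤ 1.7 := by
        have := hfR n; rwa [Submodule.coe_norm] at this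
      refine ⟨(‖(f n : Y)‖ : ℂ) • g, G.smul_mem _ hgG, ?_, ?_⟩
      · have hfac : (f n : Y) - (‖(f n : Y)‖ : ℂ) • g = (‖(f n : Y)‖ : ℂ) • (u - g) := by
          rw [smul_sub, hu, smul_inv_smul₀ (by simpa using hnorm)]
        rw [hfac, norm_smul, Complex.norm_real, Real.norm_eq_abs,
          abs_of_nonneg (norm_nonneg _)]
        nlinarith [norm_nonneg (f n : Y), norm_nonneg (u - g), hg]
      · rw [norm_smul, Complex.norm_real, Real.norm_eq_abs, abs_of_nonneg (norm_nonneg _)]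
        have hgle : ‖g‖ ≤ ‖u‖ + ‖u - g‖ := by
          calc ‖g‖ = ‖u - (u - g)‖ := by rw [sub_sub_cancel]
            _ ≤ ‖u‖ + ‖u - g‖ := norm_sub_le _ _
        have : ‖g‖ ≤ 1.25 := by rw [hufac] at hgle; linarith
        nlinarith [norm_nonneg (f n : Y)]
  choose g hgG hgclose hgle using key
  haveI : FiniteDimensional ℂ G := hG
  haveI : ProperSpace G := FiniteDimensional.proper ℂ G
  set g' : ℕ → G := fun n => ⟨g n, hgG n⟩ with hg'
  have hgball : ∀ n, g' n ∈ closedBall (0 : G) 2.2 := by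
    intro n
    rw [mem_closedBall, dist_zero_right, Submodule.coe_norm]
    exact hgle n
  obtain ⟨t, htfin, htsub⟩ :=
    totallyBounded_iff.mp (isCompact_closedBall (0:G) 2.2).totallyBounded 0.07 (by norm_num)
  have hsel : ∀ n : ℕ, ∃ c ∈ t, g' n ∈ ball c 0.07 := by
    intro n
    have := htsub (hgball n)
    simpa using this
  choose ctr hctr hmem using hsel
  haveI : Finite t := htfin
  obtain ⟨m, n, hmn, heq⟩ := Finite.exists_ne_map_eq_of_infinite
    (fun n : ℕ => (⟨ctr n, hctr n⟩ : t))
  have hGnorm : ‖g m - g n‖ < 0.14 := by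
    have h1 := mem_ball.mp (hmem m)
    have h2 := mem_ball.mp (hmem n)
    have hceq : ctr m = ctr n := congrArg Subtype.val heq
    rw [hceq] at h1
    have htri := dist_triangle (g' m) (ctr n) (g' n)
    rw [dist_comm (ctr n) (g' n)] at htri
    have : dist (g' m) (g' n) < 0.14 := by linarith
    rw [dist_eq_norm] at this
    calc ‖g m - g n‖ = ‖(g' m - g' n : G)‖ := by
          rw [Submodule.coe_norm]; rfl
      _ < 0.14 := this
  have hsep : (1:ℝ) ≤ ‖(f m : Y) - (f n : Y)‖ := by
    have h := hfsep hmn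
    calc (1:ℝ) ≤ ‖f m - f n‖ := h
      _ = ‖(f m : Y) - (f n : Y)‖ := by rw [Submodule.coe_norm]; rfl
  have hdecomp : (f m : Y) - (f n : Y) =
      ((f m : Y) - g m) + (g m - g n) + (g n - (f n : Y)) := by abel
  have hlt : ‖(f m : Y) - (f n : Y)‖ < 1 := by
    rw [hdecomp]
    have := norm_add₃_le (E := Y)
      (a := (f m : Y) - g m) (b := g m - g n) (c := g n - (f n : Y))
    have h3 : ‖g n - (f n : Y)‖ ≤ 0.425 := by rw [norm_sub_rev]; exact hgclose n
    linarith [hgclose m]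
  linarith




/-- Quantitative Hahn–Banach: a functional of norm ≤ 4 vanishing on `G`, equal to 1 at `b`. -/
lemma aux_functional (G : Submodule ℂ Y) (b : Y)
    (hfar : ∀ g ∈ G, (4:ℝ)⁻¹ ≤ ‖b - g‖) :
    ∃ c : Y →L[ℂ] ℂ, c b = 1 ∧ ‖c‖ ≤ 4 ∧ ∀ g ∈ G, c g = 0 := by
  have hbG : b ∉ G := by
    intro hb
    have := hfar b hb
    simp at this
    norm_num at this
  set F : Y →ₗ.[ℂ] ℂ := (0 : Y →ₗ[ℂ] ℂ).toPMap G with hF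
  have hbF : b ∉ F.domain := by rwa [hF, LinearMap.toPMap_domain]
  set L : Y →ₗ.[ℂ] ℂ := F.supSpanSingleton b 1 hbF with hL
  have hdom : L.domain = G ⊔ ℂ ∙ b := by
    rw [hL, LinearPMap.domain_supSpanSingleton, hF, LinearMap.toPMap_domain]
  have hval : ∀ (u : L.domain) (g : Y), g ∈ G → ∀ t : ℂ, (u : Y) = g + t • b → L u = t := by
    intro u gg hg t hu
    have hg' : gg ∈ F.domain := by rwa [hF, LinearMap.toPMap_domain]
    have hmem : gg + t • b ∈ L.domain := by rw [← hu]; exact u.2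
    have hueq : u = ⟨gg + t • b, hmem⟩ := Subtype.ext hu
    have h0 : F ⟨gg, hg'⟩ = 0 := by
      exact LinearMap.toPMap_apply (0 : Y →ₗ[ℂ] ℂ) G ⟨gg, hg'⟩
    rw [hueq]
    calc L ⟨gg + t • b, hmem⟩ = F ⟨gg, hg'⟩ + t • 1 :=
          LinearPMap.supSpanSingleton_apply_mk F b 1 hbF gg hg' t
      _ = t := by rw [h0]; simp
  -- decomposition of elements of the domain
  have hdecomp : ∀ u : L.domain, ∃ g ∈ G, ∃ t : ℂ, (u : Y) = g + t • b := by
    intro u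
    have hu : (u : Y) ∈ G ⊔ ℂ ∙ b := by rw [← hdom]; exact u.2
    obtain ⟨g, hg, z, hz, huz⟩ := Submodule.mem_sup.mp hu
    obtain ⟨t, ht⟩ := Submodule.mem_span_singleton.mp hz
    exact ⟨g, hg, t, by rw [← huz, ← ht]⟩
  -- norm bound
  have hbound : ∀ u : L.domain, ‖L u‖ ≤ 4 * ‖u‖ := by
    intro u
    obtain ⟨g, hg, t, hu⟩ := hdecomp u
    rw [hval u g hg t hu]
    by_cases ht : t = 0
    · simp only [ht, norm_zero]
      positivity
    · have hvec : (u : Y) = t • (b - (-(t⁻¹ • g))) := by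
        rw [hu, sub_neg_eq_add, smul_add, smul_smul, mul_inv_cancel₀ ht, one_smul, add_comm]
      have hnu : ‖(u : Y)‖ = ‖t‖ * ‖b - (-(t⁻¹ • g))‖ := by rw [hvec, norm_smul]
      have hmem : -(t⁻¹ • g) ∈ G := G.neg_mem (G.smul_mem _ hg)
      have h4 := hfar _ hmem
      have hun : ‖u‖ = ‖(u : Y)‖ := Submodule.coe_norm u
      rw [hun, hnu]
      have h0t : 0 < ‖t‖ := norm_pos_iff.mpr ht
      nlinarith
  -- build continuous functional on the subspace and extend
  set cl : L.domain →L[ℂ] ℂ := LinearMap.mkContinuous L.toFun 4 hbound with hcl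
  obtain ⟨c, hcext, hcnorm⟩ := exists_extension_norm_eq L.domain cl
  have hclnorm : ‖cl‖ ≤ 4 := LinearMap.mkContinuous_norm_le _ (by norm_num) _
  refine ⟨c, ?_, by rw [hcnorm]; exact hclnorm, ?_⟩
  · have hbmem : b ∈ L.domain := by
      rw [hdom]
      exact Submodule.mem_sup_right (Submodule.mem_span_singleton_self b)
    have := hcext ⟨b, hbmem⟩
    rw [this]
    have : cl ⟨b, hbmem⟩ = L ⟨b, hbmem⟩ := rfl
    rw [this, hval ⟨b, hbmem⟩ 0 G.zero_mem 1 (by simp)]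
  · intro g hg
    have hgmem : g ∈ L.domain := by rw [hdom]; exact Submodule.mem_sup_left hg
    have := hcext ⟨g, hgmem⟩
    rw [this]
    have h2 : cl ⟨g, hgmem⟩ = L ⟨g, hgmem⟩ := rfl
    rw [h2, hval ⟨g, hgmem⟩ g hg 0 (by simp)]



/-- The biorthogonal sequence construction. -/
lemma aux_seq (hinf : ¬ FiniteDimensional ℂ Y) (d : ℕ → Y) :
    ∃ (b : ℕ → Y) (e : ℕ → (Y →L[ℂ] ℂ)),
      (∀ n, ‖b n‖ = 1) ∧ (∀ n, ‖e n‖ ≤ 4) ∧ (∀ n, e n (b n) = 1) ∧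
      (∀ m n, m ≠ n → e m (b n) = 0) ∧ (∀ k n, k ≤ n → e n (d k) = 0) := by
  set A := ℕ × Y × (Y →L[ℂ] ℂ)
  set P : A → Prop := fun x =>
    ‖x.2.1‖ = 1 ∧ ‖x.2.2‖ ≤ 4 ∧ x.2.2 x.2.1 = 1 ∧ ∀ k ≤ x.1, x.2.2 (d k) = 0 with hP
  set r : A → A → Prop := fun x y => x.1 < y.1 ∧ x.2.2 y.2.1 = 0 ∧ y.2.2 x.2.1 = 0 with hr
  have hstep : ∀ s : Finset A, (∀ x ∈ s, P x) → ∃ y, P y ∧ ∀ x ∈ s, r x y := by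
    intro s _
    classical
    set N : ℕ := (s.sup fun x => x.1) + 1 with hN
    set T : Y →ₗ[ℂ] (s → ℂ) := LinearMap.pi (fun x => ((x : A).2.2 : Y →ₗ[ℂ] ℂ)) with hT
    have hVinf : ¬ FiniteDimensional ℂ (LinearMap.ker T) := aux_ker_infdim hinf T
    set GS : Set Y := ((fun x : A => x.2.1) '' ↑s) ∪ (d '' Set.Iic N) with hGS
    have hGSfin : GS.Finite :=
      (s.finite_toSet.image _).union ((Set.finite_Iic N).image d)
    set G : Submodule ℂ Y := Submodule.span ℂ GS with hG
    have hGfin : FiniteDimensional ℂ G := FiniteDimensional.span_of_finite ℂ hGSfin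
    obtain ⟨b, hbV, hbnorm, hbfar⟩ := aux_far_vector (LinearMap.ker T) hVinf G hGfin
    obtain ⟨e, heb, henorm, heG⟩ := aux_functional G b hbfar
    refine ⟨(N, b, e), ⟨hbnorm, henorm, heb, ?_⟩, ?_⟩
    · intro k hk
      exact heG _ (Submodule.subset_span (Or.inr ⟨k, Set.mem_Iic.mpr hk, rfl⟩))
    · intro x hx
      refine ⟨?_, ?_, ?_⟩
      · exact Nat.lt_succ_of_le (Finset.le_sup (f := fun x : A => x.1) hx)
      · have : T b = 0 := LinearMap.mem_ker.mp hbV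
        have := congrFun this ⟨x, hx⟩
        exact this
      · exact heG _ (Submodule.subset_span (Or.inl ⟨x, hx, rfl⟩))
  obtain ⟨f, hfP, hfr⟩ := exists_seq_of_forall_finset_exists P r hstep
  have hidx : StrictMono (fun n => (f n).1) := by
    have : ∀ n, (f n).1 < (f (n+1)).1 := fun n => (hfr n (n+1) (Nat.lt_succ_self n)).1
    exact strictMono_nat_of_lt_succ this
  refine ⟨fun n => (f n).2.1, fun n => (f n).2.2, fun n => (hfP n).1, fun n => (hfP n).2.1,
    fun n => (hfP n).2.2.1, ?_, ?_⟩
  · intro m n hmn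
    rcases lt_or_gt_of_ne hmn with h | h
    · exact (hfr m n h).2.1
    · exact (hfr n m h).2.2
  · intro k n hkn
    exact (hfP n).2.2.2 k (le_trans hkn hidx.le_apply)

end AuxHelpers


lemma aux_ev_lower {α : ℕ → ℝ} (hα : ∀ n, 0 < α n)
    (hαlim : Tendsto (fun n => (α n) ^ ((n : ℝ)⁻¹)) atTop (nhds 1))
    {s : ℝ} (h0 : 0 < s) (h1 : s < 1) : ∀ᶠ n in atTop, s ^ n ≤ α n := by
  have h := hαlim.eventually (eventually_gt_nhds h1)
  filter_upwards [h, eventually_ge_atTop 1] with n hn hn1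
  have hne : ((n : ℝ)) ≠ 0 := by positivity
  have : (α n ^ ((n : ℝ)⁻¹)) ^ n = α n := by
    rw [← Real.rpow_natCast (α n ^ ((n : ℝ)⁻¹)) n, ← Real.rpow_mul (hα n).le,
      inv_mul_cancel₀ hne, Real.rpow_one]
  calc s ^ n ≤ (α n ^ ((n : ℝ)⁻¹)) ^ n := pow_le_pow_left₀ h0.le hn.le n
    _ = α n := this

lemma aux_ev_upper {α : ℕ → ℝ} (hα : ∀ n, 0 < α n)
    (hαlim : Tendsto (fun n => (α n) ^ ((n : ℝ)⁻¹)) atTop (nhds 1))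
    {s : ℝ} (h1 : 1 < s) : ∀ᶠ n in atTop, α n ≤ s ^ n := by
  have h := hαlim.eventually (eventually_lt_nhds h1)
  filter_upwards [h, eventually_ge_atTop 1] with n hn hn1
  have hne : ((n : ℝ)) ≠ 0 := by positivity
  have heq : (α n ^ ((n : ℝ)⁻¹)) ^ n = α n := by
    rw [← Real.rpow_natCast (α n ^ ((n : ℝ)⁻¹)) n, ← Real.rpow_mul (hα n).le,
      inv_mul_cancel₀ hne, Real.rpow_one]
  calc α n = (α n ^ ((n : ℝ)⁻¹)) ^ n := heq.symm
    _ ≤ s ^ n := pow_le_pow_left₀ (Real.rpow_nonneg (hα n).le _) hn.le n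

lemma aux_sum_div {α : ℕ → ℝ} (hα : ∀ n, 0 < α n)
    (hαlim : Tendsto (fun n => (α n) ^ ((n : ℝ)⁻¹)) atTop (nhds 1))
    {r : ℝ} (h0 : 0 ≤ r) (h1 : r < 1) : Summable (fun n => r ^ n / α n) := by
  set s : ℝ := (1 + r) / 2 with hs
  have h0s : 0 < s := by rw [hs]; linarith
  have hs1 : s < 1 := by rw [hs]; linarith
  have hrs : r < s := by rw [hs]; linarith
  have hgeo : Summable (fun n => (r / s) ^ n) :=
    summable_geometric_of_lt_one (by positivity) (by rw [div_lt_one h0s]; exact hrs)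
  apply Summable.of_norm_bounded_eventually hgeo
  rw [Nat.cofinite_eq_atTop]
  filter_upwards [aux_ev_lower hα hαlim h0s hs1] with n hn
  have hαn := hα n
  rw [Real.norm_eq_abs, abs_of_nonneg (by positivity), div_pow]
  gcongr

lemma aux_sum_mul {α : ℕ → ℝ} (hα : ∀ n, 0 < α n)
    (hαlim : Tendsto (fun n => (α n) ^ ((n : ℝ)⁻¹)) atTop (nhds 1))
    {ρ C : ℝ} (hρ : 1 < ρ) (a : ℕ → ℝ) (ha : ∀ n, 0 ≤ a n)
    (hbound : ∀ n, a n * ρ ^ n ≤ C) : Summable (fun n => a n * α n) := by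
  set s : ℝ := (1 + ρ) / 2 with hs
  have h1s : 1 < s := by rw [hs]; linarith
  have hsρ : s < ρ := by rw [hs]; linarith
  have h0ρ : (0:ℝ) < ρ := by linarith
  have hgeo : Summable (fun n => C * (s / ρ) ^ n) :=
    (summable_geometric_of_lt_one (by positivity) (by rw [div_lt_one h0ρ]; exact hsρ)).mul_left C
  apply Summable.of_norm_bounded_eventually hgeo
  rw [Nat.cofinite_eq_atTop]
  filter_upwards [aux_ev_upper hα hαlim h1s] with n hn
  have hαn := hα n
  rw [Real.norm_eq_abs, abs_of_nonneg (mul_nonneg (ha n) hαn.le)]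
  have h1 : a n * α n ≤ a n * s ^ n := mul_le_mul_of_nonneg_left hn (ha n)
  have h2 : a n ≤ C / ρ ^ n := by
    rw [le_div_iff₀ (by positivity)]
    exact hbound n
  calc a n * α n ≤ a n * s ^ n := h1
    _ ≤ (C / ρ ^ n) * s ^ n := mul_le_mul_of_nonneg_right h2 (by positivity)
    _ = C * (s / ρ) ^ n := by rw [div_mul_eq_mul_div, mul_div_assoc, ← div_pow]

theorem stmt_10 {Y : Type*} [NormedAddCommGroup Y] [NormedSpace ℂ Y] [CompleteSpace Y]
    [TopologicalSpace.SeparableSpace Y] (hinf : ¬ FiniteDimensional ℂ Y)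
    (α : ℕ → ℝ) (hα : ∀ n, 0 < α n)
    (hαlim : Tendsto (fun n => (α n) ^ ((n : ℝ)⁻¹)) atTop (nhds 1)) :
    ∃ J : Y →ₗ[ℂ] (ℂ → ℂ),
      Function.Injective J ∧
      (∀ y : Y, DifferentiableOn ℂ (J y) (ball (0 : ℂ) 1)) ∧
      (∀ r : ℝ, 0 < r → r < 1 →
        ∃ C : ℝ, ∀ (y : Y) (z : ℂ), ‖z‖ ≤ r → ‖J y z‖ ≤ C * ‖y‖) ∧
      (∀ f : ℂ → ℂ, (∃ U : Set ℂ, IsOpen U ∧ closedBall (0 : ℂ) 1 ⊆ U ∧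
          DifferentiableOn ℂ f U) →
        ∃ y : Y, ∀ z ∈ ball (0 : ℂ) 1, J y z = f z) ∧
      Dense {y : Y | ∃ p : Polynomial ℂ, ∀ z ∈ ball (0 : ℂ) 1, J y z = p.eval z} ∧
      (∀ n : ℕ, ∃ y : Y, (∀ z ∈ ball (0 : ℂ) 1, J y z = z ^ n) ∧ ‖y‖ = α n) := by
  classical
  have hne : Nonempty Y := ⟨0⟩
  obtain ⟨d, hd⟩ := TopologicalSpace.exists_dense_seq Y
  -- separating functionals
  have hgsep : ∀ k : ℕ, ∃ gk : Y →L[ℂ] ℂ, d k ≠ 0 → (‖gk‖ = 1 ∧ gk (d k) = (‖d k‖ : ℂ)) := by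
    intro k
    by_cases h : d k = 0
    · exact ⟨0, fun h' => absurd h h'⟩
    · obtain ⟨g, hg1, hg2⟩ := exists_dual_vector ℂ (d k) (norm_ne_zero_iff.mpr h)
      exact ⟨g, fun _ => ⟨hg1, hg2⟩⟩
  choose g hgspec using hgsep
  -- biorthogonal system
  obtain ⟨b, e, hbnorm, henorm, heb, heortho, hed⟩ := aux_seq hinf d
  -- rescaled coefficient functionals
  set c : ℕ → Y →L[ℂ] ℂ := fun n => ((α n : ℂ))⁻¹ • e n with hc
  have hαC : ∀ n, ((α n : ℂ)) ≠ 0 := fun n => by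
    simpa using (hα n).ne'
  have hcnorm : ∀ n, ‖c n‖ ≤ 4 * (α n)⁻¹ := by
    intro n
    have h40 : (0:ℝ) ≤ 4 * (α n)⁻¹ :=
      mul_nonneg (by norm_num) (inv_nonneg.mpr (hα n).le)
    apply ContinuousLinearMap.opNorm_le_bound _ h40
    intro x
    have happ : c n x = ((α n : ℂ))⁻¹ • (e n x) := rfl
    rw [happ, norm_smul, norm_inv, Complex.norm_real, Real.norm_eq_abs, abs_of_pos (hα n)]
    calc (α n)⁻¹ * ‖e n x‖ ≤ (α n)⁻¹ * (4 * ‖x‖) := by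
          apply mul_le_mul_of_nonneg_left _ (inv_nonneg.mpr (hα n).le)
          exact le_trans ((e n).le_opNorm x)
            (mul_le_mul_of_nonneg_right (henorm n) (norm_nonneg x))
      _ = 4 * (α n)⁻¹ * ‖x‖ := by ring
  have hcb : ∀ n, c n (b n) = ((α n : ℂ))⁻¹ := by
    intro n
    rw [show c n = ((α n : ℂ))⁻¹ • e n from rfl]
    simp only [ContinuousLinearMap.smul_apply, heb n, smul_eq_mul, mul_one]
  have hcb0 : ∀ m n, m ≠ n → c m (b n) = 0 := by
    intro m n h
    rw [show c m = ((α m : ℂ))⁻¹ • e m from rfl]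
    simp only [ContinuousLinearMap.smul_apply, heortho m n h, smul_eq_mul, mul_zero]
  have hcd : ∀ k n, k ≤ n → c n (d k) = 0 := by
    intro k n h
    rw [show c n = ((α n : ℂ))⁻¹ • e n from rfl]
    simp only [ContinuousLinearMap.smul_apply, hed k n h, smul_eq_mul, mul_zero]
  -- summability
  have hkey2 : ∀ (y : Y) (z : ℂ), ‖z‖ < 1 → Summable (fun n => ‖c n y * z ^ n‖) := by
    intro y z hz
    refine Summable.of_nonneg_of_le (f := fun n => (4 * ‖y‖) * (‖z‖ ^ n / α n))
      (fun n => norm_nonneg _) ?_ ((aux_sum_div hα hαlim (norm_nonneg z) hz).mul_left _)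
    · intro n
      rw [norm_mul, norm_pow]
      have h1 : ‖c n y‖ ≤ 4 * (α n)⁻¹ * ‖y‖ :=
        le_trans ((c n).le_opNorm y) (mul_le_mul_of_nonneg_right (hcnorm n) (norm_nonneg y))
      calc ‖c n y‖ * ‖z‖ ^ n ≤ (4 * (α n)⁻¹ * ‖y‖) * ‖z‖ ^ n :=
            mul_le_mul_of_nonneg_right h1 (by positivity)
        _ = (4 * ‖y‖) * (‖z‖ ^ n / α n) := by rw [div_eq_mul_inv]; ring
  have hkey : ∀ (y : Y) (z : ℂ), ‖z‖ < 1 → Summable (fun n => c n y * z ^ n) :=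
    fun y z hz => (hkey2 y z hz).of_norm
  -- definition of J
  set gsel : ℂ → (Y →L[ℂ] ℂ) :=
    fun z => if h : ∃ k : ℕ, z = (k : ℂ) + 2 then g h.choose else 0 with hgsel
  set Jfun : Y → ℂ → ℂ :=
    fun y z => if ‖z‖ < 1 then ∑' n, c n y * z ^ n else gsel z y with hJfun
  have hJball : ∀ (y : Y) (z : ℂ), ‖z‖ < 1 → Jfun y z = ∑' n, c n y * z ^ n := by
    intro y z hz
    rw [show Jfun y z = if ‖z‖ < 1 then ∑' n, c n y * z ^ n else gsel z y from rfl, if_pos hz]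
  have hJout : ∀ (y : Y) (z : ℂ), ¬ ‖z‖ < 1 → Jfun y z = gsel z y := by
    intro y z hz
    rw [show Jfun y z = if ‖z‖ < 1 then ∑' n, c n y * z ^ n else gsel z y from rfl, if_neg hz]
  have hJadd : ∀ y₁ y₂, Jfun (y₁ + y₂) = Jfun y₁ + Jfun y₂ := by
    intro y₁ y₂
    funext z
    by_cases hz : ‖z‖ < 1
    · rw [Pi.add_apply, hJball _ _ hz, hJball _ _ hz, hJball _ _ hz,
        ← Summable.tsum_add (hkey y₁ z hz) (hkey y₂ z hz)]
      exact tsum_congr fun n => by rw [map_add]; ring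
    · rw [Pi.add_apply, hJout _ _ hz, hJout _ _ hz, hJout _ _ hz, map_add]
  have hJsmul : ∀ (a : ℂ) (y : Y), Jfun (a • y) = a • Jfun y := by
    intro a y
    funext z
    by_cases hz : ‖z‖ < 1
    · rw [Pi.smul_apply, hJball _ _ hz, hJball _ _ hz, smul_eq_mul, ← tsum_mul_left]
      exact tsum_congr fun n => by rw [map_smul]; simp only [smul_eq_mul]; ring
    · rw [Pi.smul_apply, hJout _ _ hz, hJout _ _ hz, map_smul, smul_eq_mul]
  set Jlin : Y →ₗ[ℂ] (ℂ → ℂ) := { toFun := Jfun, map_add' := hJadd, map_smul' := hJsmul }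
    with hJlin
  have hJapp : ∀ (y : Y) (z : ℂ), Jlin y z = Jfun y z := fun y z => rfl
  refine ⟨Jlin, ?_, ?_, ?_, ?_, ?_, ?_⟩
  -- 1: injectivity
  · rw [injective_iff_map_eq_zero]
    intro y hy
    by_contra hy0
    have hynorm : 0 < ‖y‖ := norm_pos_iff.mpr hy0
    obtain ⟨k, hk⟩ := hd.exists_dist_lt y (show (0:ℝ) < ‖y‖/3 by positivity)
    have hz1 : ¬ ‖((k:ℂ) + 2)‖ < 1 := by
      have hcast : ((k:ℂ) + 2) = ((k + 2 : ℕ) : ℂ) := by push_cast; ring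
      rw [hcast, Complex.norm_natCast]
      push_cast
      have : (0:ℝ) ≤ (k:ℝ) := Nat.cast_nonneg k
      linarith
    have hex : ∃ k' : ℕ, ((k:ℂ) + 2) = (k' : ℂ) + 2 := ⟨k, rfl⟩
    have hchoose : hex.choose = k := by
      have hspec := hex.choose_spec
      have h2 : ((hex.choose : ℂ)) = (k : ℂ) := (add_right_cancel hspec.symm)
      exact_mod_cast h2
    have hgsel2 : gsel ((k:ℂ) + 2) = g k := by
      rw [show gsel ((k:ℂ)+2)
          = if h : ∃ k' : ℕ, ((k:ℂ)+2) = (k' : ℂ) + 2 then g h.choose else 0 from rfl,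
        dif_pos hex, hchoose]
    have hval : Jfun y ((k:ℂ) + 2) = 0 := by
      rw [← hJapp]
      exact congrFun hy ((k:ℂ) + 2)
    rw [hJout _ _ hz1, hgsel2] at hval
    -- distance estimates
    have hdk : ‖y‖ - ‖y‖/3 ≤ ‖d k‖ := by
      have h1 : ‖y‖ - ‖d k‖ ≤ ‖y - d k‖ := norm_sub_norm_le y (d k)
      have h2 : ‖y - d k‖ < ‖y‖/3 := by rw [← dist_eq_norm]; exact hk
      linarith
    have hdk0 : d k ≠ 0 := by
      intro h0
      rw [h0, norm_zero] at hdk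
      linarith
    obtain ⟨hg1, hg2⟩ := hgspec k hdk0
    have hgyd : ‖g k (d k) - g k y‖ ≤ ‖d k - y‖ := by
      rw [← map_sub]
      calc ‖g k (d k - y)‖ ≤ ‖g k‖ * ‖d k - y‖ := (g k).le_opNorm _
        _ = ‖d k - y‖ := by rw [hg1, one_mul]
    have hdky : ‖d k - y‖ < ‖y‖/3 := by rw [norm_sub_rev, ← dist_eq_norm]; exact hk
    have hgdk : ‖g k (d k)‖ = ‖d k‖ := by rw [hg2, Complex.norm_real, Real.norm_eq_abs,
      abs_of_nonneg (norm_nonneg _)]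
    rw [hval, sub_zero] at hgyd
    rw [hgdk] at hgyd
    linarith
  -- 2: differentiability
  · intro y
    intro z₀ hz₀
    rw [mem_ball, dist_zero_right] at hz₀
    set r : ℝ := (1 + ‖z₀‖)/2 with hr
    have hr0 : 0 < r := by rw [hr]; positivity
    have hr1 : r < 1 := by rw [hr]; linarith
    have hz₀r : ‖z₀‖ < r := by rw [hr]; linarith
    have hdiff : DifferentiableOn ℂ (fun w => ∑' n, c n y * w ^ n) (ball 0 r) := by
      apply Complex.differentiableOn_tsum_of_summable_norm
        (u := fun n => (4 * ‖y‖) * (r ^ n / α n))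
        ((aux_sum_div hα hαlim hr0.le hr1).mul_left _)
        (fun n => ((differentiable_const _).mul (differentiable_pow n)).differentiableOn)
        isOpen_ball
      intro n w hw
      rw [mem_ball, dist_zero_right] at hw
      rw [norm_mul, norm_pow]
      have h1 : ‖c n y‖ ≤ 4 * (α n)⁻¹ * ‖y‖ :=
        le_trans ((c n).le_opNorm y) (mul_le_mul_of_nonneg_right (hcnorm n) (norm_nonneg y))
      calc ‖c n y‖ * ‖w‖ ^ n ≤ (4 * (α n)⁻¹ * ‖y‖) * r ^ n := by
            apply mul_le_mul h1 (pow_le_pow_left₀ (norm_nonneg w) hw.le n) (by positivity)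
              (mul_nonneg (mul_nonneg (by norm_num) (inv_nonneg.mpr (hα n).le)) (norm_nonneg _))
        _ = (4 * ‖y‖) * (r ^ n / α n) := by rw [div_eq_mul_inv]; ring
    have hmem : ball (0:ℂ) r ∈ nhds z₀ :=
      isOpen_ball.mem_nhds (by rw [mem_ball, dist_zero_right]; exact hz₀r)
    have hEq : ∀ w ∈ ball (0:ℂ) r, Jfun y w = ∑' n, c n y * w ^ n := by
      intro w hw
      rw [mem_ball, dist_zero_right] at hw
      exact hJball y w (lt_trans hw hr1)
    have hda : DifferentiableAt ℂ (Jfun y) z₀ := by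
      have h1 : DifferentiableAt ℂ (fun w => ∑' n, c n y * w ^ n) z₀ :=
        hdiff.differentiableAt hmem
      exact h1.congr_of_eventuallyEq (eventually_of_mem hmem fun w hw => (hEq w hw))
    have : Jlin y = Jfun y := rfl
    rw [this]
    exact hda.differentiableWithinAt
  -- 3: boundedness
  · intro r hr0 hr1
    refine ⟨4 * ∑' n, r ^ n / α n, ?_⟩
    intro y z hz
    have hz1 : ‖z‖ < 1 := lt_of_le_of_lt hz hr1
    have hsum := aux_sum_div hα hαlim hr0.le hr1
    rw [hJapp, hJball y z hz1]
    have hbound : ∀ n, ‖c n y * z ^ n‖ ≤ (4 * ‖y‖) * (r ^ n / α n) := by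
      intro n
      rw [norm_mul, norm_pow]
      have h1 : ‖c n y‖ ≤ 4 * (α n)⁻¹ * ‖y‖ :=
        le_trans ((c n).le_opNorm y) (mul_le_mul_of_nonneg_right (hcnorm n) (norm_nonneg y))
      calc ‖c n y‖ * ‖z‖ ^ n ≤ (4 * (α n)⁻¹ * ‖y‖) * r ^ n := by
            apply mul_le_mul h1 (pow_le_pow_left₀ (norm_nonneg z) hz n) (by positivity)
              (mul_nonneg (mul_nonneg (by norm_num) (inv_nonneg.mpr (hα n).le)) (norm_nonneg _))
        _ = (4 * ‖y‖) * (r ^ n / α n) := by rw [div_eq_mul_inv]; ring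
    calc ‖∑' n, c n y * z ^ n‖ ≤ ∑' n, ‖c n y * z ^ n‖ :=
          norm_tsum_le_tsum_norm (hkey2 y z hz1)
      _ ≤ ∑' n, (4 * ‖y‖) * (r ^ n / α n) :=
          Summable.tsum_le_tsum hbound (hkey2 y z hz1) (hsum.mul_left _)
      _ = (4 * ‖y‖) * ∑' n, (r ^ n / α n) := tsum_mul_left
      _ = 4 * (∑' n, r ^ n / α n) * ‖y‖ := by ring
  -- 4: surjectivity onto functions holomorphic near the closed disk
  · rintro f ⟨U, hUopen, hUsub, hUdiff⟩
    obtain ⟨δ, hδ0, hδsub⟩ :=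
      (isCompact_closedBall (0:ℂ) 1).exists_thickening_subset_open hUopen hUsub
    have hballU : ball (0:ℂ) (δ + 1) ⊆ U := by
      rw [← thickening_closedBall hδ0 zero_le_one]
      exact hδsub
    set R : ℝ := 1 + δ/2 with hR
    have hR1 : 1 < R := by rw [hR]; linarith
    have hR0 : 0 ≤ R := by linarith
    set Rnn : NNReal := ⟨R, hR0⟩ with hRnn
    have hdiffR : DifferentiableOn ℂ f (closedBall 0 (Rnn : ℝ)) := by
      apply hUdiff.mono
      intro w hw
      apply hballU
      rw [mem_closedBall, dist_zero_right] at hw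
      rw [mem_ball, dist_zero_right]
      have : (Rnn : ℝ) = R := rfl
      rw [this] at hw
      rw [hR] at hw
      linarith
    have hps : HasFPowerSeriesOnBall f (cauchyPowerSeries f 0 Rnn) 0 Rnn :=
      hdiffR.hasFPowerSeriesOnBall (by rw [← NNReal.coe_pos]; show (0:ℝ) < R; linarith)
    set p := cauchyPowerSeries f 0 Rnn with hp
    set ρ : NNReal := ⟨1 + δ/4, by positivity⟩ with hρ
    have hρR : ρ < Rnn := by
      rw [← NNReal.coe_lt_coe]
      show 1 + δ/4 < R
      rw [hR]; linarith
    have hρrad : (ρ : ENNReal) < p.radius :=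
      lt_of_lt_of_le (by exact_mod_cast hρR) hps.r_le
    obtain ⟨C, hC0, hCb⟩ := p.norm_mul_pow_le_of_lt_radius hρrad
    set a : ℕ → ℂ := fun n => p.coeff n with ha
    have hanorm : ∀ n, ‖a n‖ * ((ρ : ℝ)) ^ n ≤ C := by
      intro n
      rw [show a n = p.coeff n from rfl, ← FormalMultilinearSeries.norm_apply_eq_norm_coef]
      exact hCb n
    have hρ1 : (1:ℝ) < (ρ : ℝ) := by show (1:ℝ) < 1 + δ/4; linarith
    have hsumy : Summable (fun n => ‖a n‖ * α n) :=
      aux_sum_mul hα hαlim hρ1 _ (fun n => norm_nonneg _) hanorm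
    have hsummv : Summable (fun n => (a n * (α n : ℂ)) • b n) := by
      apply Summable.of_norm
      apply Summable.congr hsumy
      intro n
      rw [norm_smul, hbnorm n, mul_one, norm_mul, Complex.norm_real, Real.norm_eq_abs,
        abs_of_pos (hα n)]
    set y := ∑' n, (a n * (α n : ℂ)) • b n with hy
    have hcy : ∀ m, c m y = a m := by
      intro m
      rw [hy, ContinuousLinearMap.map_tsum (c m) hsummv]
      rw [tsum_eq_single m ?hvan]
      case hvan =>
        intro n hn
        rw [map_smul, hcb0 m n (Ne.symm hn), smul_eq_mul, mul_zero]
      rw [map_smul, hcb m, smul_eq_mul]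
      rw [mul_assoc, mul_inv_cancel₀ (hαC m), mul_one]
    refine ⟨y, ?_⟩
    intro z hz
    rw [mem_ball, dist_zero_right] at hz
    rw [hJapp, hJball y z hz]
    have hzmem : z ∈ Metric.eball (0:ℂ) Rnn := by
      rw [Metric.mem_eball, edist_zero_right]
      have h1 : ‖z‖₊ < Rnn := by
        rw [← NNReal.coe_lt_coe, coe_nnnorm]
        show ‖z‖ < R
        linarith
      exact_mod_cast h1
    have hfz : f z = ∑' n, a n * z ^ n := by
      have h1 := hps.sum hzmem
      rw [zero_add] at h1
      rw [h1]
      rw [FormalMultilinearSeries.sum]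
      exact tsum_congr fun n => by
        rw [FormalMultilinearSeries.apply_eq_pow_smul_coeff, smul_eq_mul]
        rw [show a n = p.coeff n from rfl]
        ring
    rw [hfz]
    exact tsum_congr fun n => by rw [hcy n]
  -- 5: density of polynomial preimages
  · apply Dense.mono _ hd
    rintro _ ⟨k, rfl⟩
    refine ⟨∑ n ∈ Finset.range (k+1), Polynomial.C (c n (d k)) * Polynomial.X ^ n, ?_⟩
    intro z hz
    rw [mem_ball, dist_zero_right] at hz
    rw [hJapp, hJball _ _ hz]
    rw [tsum_eq_sum (s := Finset.range (k+1)) ?hvan]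
    case hvan =>
      intro n hn
      rw [Finset.mem_range, not_lt] at hn
      rw [hcd k n (by omega), zero_mul]
    rw [Polynomial.eval_finset_sum]
    apply Finset.sum_congr rfl
    intro n _
    simp [Polynomial.eval_mul, Polynomial.eval_pow]
  -- 6: monomials attained with prescribed norms
  · intro n
    refine ⟨(α n : ℂ) • b n, ?_, ?_⟩
    · intro z hz
      rw [mem_ball, dist_zero_right] at hz
      rw [hJapp, hJball _ _ hz]
      rw [tsum_eq_single n ?hvan]
      case hvan =>
        intro m hm
        rw [map_smul, hcb0 m n hm, smul_eq_mul, mul_zero, zero_mul]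
      rw [map_smul, hcb n, smul_eq_mul]
      rw [mul_inv_cancel₀ (hαC n), one_mul]
    · rw [norm_smul, Complex.norm_real, Real.norm_eq_abs, abs_of_pos (hα n), hbnorm n, mul_one]
end

section
/- Every separable infinite-dimensional Hilbert space H of holomorphic functions on the unit disk (continuously embedded in Hol(𝔻)) in which the polynomials form a dense subspace admits a linear polynomial approximation scheme: a sequence of bounded linear operators T_n : H → H such that each T_n(f) is a polynomial and ‖T_n f − f‖_H → 0 for all f ∈ H. -/
/-!
Enumerate a dense sequence inside the (dense) subspace of polynomial vectors and let `U n` be the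
span of its first `n + 1` terms. The orthogonal projections onto the increasing finite-dimensional
spaces `U n` are bounded, take values in polynomial vectors, and converge strongly to the identity
because `⋃ n, U n` is dense.
-/

open Filter Metric Topology TopologicalSpace

section DenseSubmodule

variable {𝕜 E : Type*}

theorem Submodule.exists_monotone_finiteDimensional_le_of_dense [NontriviallyNormedField 𝕜]
    [NormedAddCommGroup E] [NormedSpace 𝕜 E] [SeparableSpace E]
    (S : Submodule 𝕜 E) (hS : Dense (S : Set E)) :
    ∃ U : ℕ → Submodule 𝕜 E, Monotone U ∧ (∀ n, FiniteDimensional 𝕜 (U n)) ∧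
      (∀ n, U n ≤ S) ∧ ⊤ ≤ (⨆ n, U n).topologicalClosure := by
  obtain ⟨u, hu⟩ := exists_dense_seq S
  have hu' : DenseRange fun n => (u n : E) := hS.denseRange_val.comp hu continuous_subtype_val
  refine ⟨fun n => Submodule.span 𝕜 ((fun i => (u i : E)) '' Set.Iic n),
    fun m n hmn => Submodule.span_mono (Set.image_mono (Set.Iic_subset_Iic.mpr hmn)),
    fun n => FiniteDimensional.span_of_finite 𝕜 ((Set.finite_Iic n).image _),
    fun n => Submodule.span_le.mpr (by rintro _ ⟨i, -, rfl⟩; exact (u i).2), ?_⟩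
  intro x _
  rw [← SetLike.mem_coe, Submodule.topologicalClosure_coe]
  refine closure_mono ?_ (hu' x)
  rintro _ ⟨i, rfl⟩
  exact Submodule.mem_iSup_of_mem i (Submodule.subset_span ⟨i, Set.self_mem_Iic, rfl⟩)

theorem Submodule.exists_clm_mem_tendsto_self_of_dense [RCLike 𝕜]
    [NormedAddCommGroup E] [InnerProductSpace 𝕜 E] [SeparableSpace E]
    (S : Submodule 𝕜 E) (hS : Dense (S : Set E)) :
    ∃ T : ℕ → E →L[𝕜] E, (∀ n x, T n x ∈ S) ∧ ∀ x, Tendsto (fun n => T n x) atTop (𝓝 x) := by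
  obtain ⟨U, hmono, hfd, hle, hdense⟩ := S.exists_monotone_finiteDimensional_le_of_dense hS
  exact ⟨fun n => (U n).starProjection, fun n x => hle n ((U n).starProjection_apply_mem x),
    fun x => Submodule.starProjection_tendsto_self U hmono x hdense⟩

end DenseSubmodule

def polynomialOnSubmodule {R M : Type*} [CommRing R] [AddCommGroup M] [Module R M]
    (ι : M →ₗ[R] (R → R)) (s : Set R) : Submodule R M where
  carrier := {x | ∃ p : Polynomial R, ∀ z ∈ s, ι x z = p.eval z}
  zero_mem' := ⟨0, fun z _ => by simp⟩
  add_mem' := by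
    rintro x y ⟨p, hp⟩ ⟨q, hq⟩
    exact ⟨p + q, fun z hz => by simp [hp z hz, hq z hz]⟩
  smul_mem' := by
    rintro c x ⟨p, hp⟩
    exact ⟨Polynomial.C c * p, fun z hz => by simp [hp z hz]⟩

theorem stmt_18_general {H : Type*} [NormedAddCommGroup H] [InnerProductSpace ℂ H]
    [TopologicalSpace.SeparableSpace H]
    (ι : H →ₗ[ℂ] (ℂ → ℂ))
    (hdense : Dense {x : H | ∃ p : Polynomial ℂ, ∀ z ∈ ball (0 : ℂ) 1, ι x z = p.eval z}) :
    ∃ T : ℕ → H →L[ℂ] H,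
      (∀ (n : ℕ) (f : H), ∃ p : Polynomial ℂ,
        ∀ z ∈ ball (0 : ℂ) 1, ι (T n f) z = p.eval z) ∧
      ∀ f : H, Tendsto (fun n => ‖T n f - f‖) atTop (nhds 0) := by
  obtain ⟨T, hpoly, hlim⟩ :=
    (polynomialOnSubmodule ι (ball 0 1)).exists_clm_mem_tendsto_self_of_dense hdense
  exact ⟨T, hpoly, fun f => tendsto_iff_norm_sub_tendsto_zero.mp (hlim f)⟩

theorem stmt_18 {H : Type*} [NormedAddCommGroup H] [InnerProductSpace ℂ H] [CompleteSpace H]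
    [TopologicalSpace.SeparableSpace H] (hinf : ¬ FiniteDimensional ℂ H)
    (ι : H →ₗ[ℂ] (ℂ → ℂ)) (hinj : Function.Injective ι)
    (hholo : ∀ x : H, DifferentiableOn ℂ (ι x) (ball (0 : ℂ) 1))
    (hcont : ∀ r : ℝ, 0 < r → r < 1 →
      ∃ C : ℝ, ∀ (x : H) (z : ℂ), ‖z‖ ≤ r → ‖ι x z‖ ≤ C * ‖x‖)
    (hdense : Dense {x : H | ∃ p : Polynomial ℂ, ∀ z ∈ ball (0 : ℂ) 1, ι x z = p.eval z}) :
    ∃ T : ℕ → H →L[ℂ] H,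
      (∀ (n : ℕ) (f : H), ∃ p : Polynomial ℂ,
        ∀ z ∈ ball (0 : ℂ) 1, ι (T n f) z = p.eval z) ∧
      ∀ f : H, Tendsto (fun n => ‖T n f - f‖) atTop (nhds 0) :=
  stmt_18_general ι hdense
end
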